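/- For A = {0,1} and any n ≥ 2, the only linear universal partial words for A^n containing two adjacent ◊s, up to reversal and permuting the letters 0 and 1, are ◊◊ (for n = 2) and ◊◊0111 (for n = 3). In particular, for n ≥ 4 no binary linear upword with two adjacent ◊s exists. -/

import Mathlib

/-- A partial-word symbol over the alphabet `Fin α`: `none` is the wildcard `◊`. -/
abbrev PSym (α : ℕ) := Option (Fin α)

/-- The word `v ∈ A^*` appears as a factor of the partial word `u` at 0-based position `i`:
each symbol of `u` in the window is either `◊` or equals the corresponding letter of `v`. -/
def MatchAt {α : ℕ} (u : List (PSym α)) (v : List (Fin α)) (i : ℕ) : Prop :=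
  i + v.length ≤ u.length ∧
    ∀ j < v.length, u[i + j]? = some none ∨ u[i + j]? = (v[j]?).map some

/-- `u` is a linear universal partial word (upword) for `A^n`, `A = Fin α`:
every word of length `n` over `A` appears exactly once as a factor. -/
def IsLinearUpword (α n : ℕ) (u : List (PSym α)) : Prop :=
  ∀ v : List (Fin α), v.length = n → ∃! i : ℕ, MatchAt u v i

/-- `v` appears as a cyclic factor of the partial word `u` at position `i`
(indices taken modulo `u.length`). -/
def CycMatchAt {α : ℕ} (u : List (PSym α)) (v : List (Fin α)) (i : ℕ) : Prop :=
  ∀ j < v.length,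
    u[(i + j) % u.length]? = some none ∨ u[(i + j) % u.length]? = (v[j]?).map some

/-- `u` is a cyclic universal partial word for `A^n`: every word of length `n` over `A`
appears exactly once as a cyclic factor. -/
def IsCyclicUpword (α n : ℕ) (u : List (PSym α)) : Prop :=
  ∀ v : List (Fin α), v.length = n → ∃! i : ℕ, i < u.length ∧ CycMatchAt u v i

/-!
Write the upword as holes at `p, p + 1` and letters `c k` elsewhere. If fewer than `n - 2` letters
stood on each side of the holes, the at most `n - 3` windows, each covering at most four words,
could not cover all `2 ^ n` words; so after a reversal at least `n - 2` letters follow the holes.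
Take the word read from position `p + 1` with its last letter flipped: an occurrence at any
`i + 1` shifts to one at `i` of a word already covered at `p`, so it occurs at `0`, for either
first letter. Hence `p = 0` and `u = ◊◊ d ⋯ d (d + 1) ⋯`. For `n ≥ 4` the word `d ⋯ d (d + 1) e`
then has no place to occur, and for `n = 2, 3` the few remaining windows are forced one by one.
-/

theorem List.eq_or_eq_of_count_eq_two {β : Type*} [BEq β] [LawfulBEq β] {l : List β} {a : β}
    {i k : ℕ} (hc : l.count a = 2) (hi : l[i]? = some a) (hi1 : l[i + 1]? = some a)
    (hk : l[k]? = some a) : k = i ∨ k = i + 1 := by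
  obtain ⟨_, hai⟩ := List.getElem?_eq_some_iff.mp hi
  obtain ⟨hlt, hai1⟩ := List.getElem?_eq_some_iff.mp hi1
  have hsplit : l = l.take i ++ a :: a :: l.drop (i + 2) := by
    conv_lhs => rw [← l.take_append_drop i, List.drop_eq_getElem_cons (by omega),
      List.drop_eq_getElem_cons hlt]
    simp [hai, hai1]
  rw [hsplit] at hc
  simp only [List.count_append, List.count_cons_self] at hc
  have hl : a ∉ l.take i := List.count_eq_zero.mp (by omega)
  have hr : a ∉ l.drop (i + 2) := List.count_eq_zero.mp (by omega)
  by_contra hne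
  rcases Nat.lt_or_gt_of_ne (show k ≠ i by omega) with hki | hki
  · exact hl (List.mem_of_getElem? (by rwa [List.getElem?_take, if_pos hki]))
  · exact hr (List.mem_of_getElem? (by
      rwa [List.getElem?_drop, show i + 2 + (k - (i + 2)) = k by omega]))

section Reverse

variable {α : ℕ}

theorem MatchAt.reverse {u : List (PSym α)} {v : List (Fin α)} {i : ℕ} (h : MatchAt u v i) :
    MatchAt u.reverse v.reverse (u.length - v.length - i) := by
  obtain ⟨hlen, hsym⟩ := h
  refine ⟨by simp; omega, fun j hj => ?_⟩
  rw [List.length_reverse] at hj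
  rw [List.getElem?_reverse (by omega), List.getElem?_reverse hj,
    show u.length - 1 - (u.length - v.length - i + j) = i + (v.length - 1 - j) by omega]
  exact hsym _ (by omega)

theorem IsLinearUpword.reverse {n : ℕ} {u : List (PSym α)} (hu : IsLinearUpword α n u) :
    IsLinearUpword α n u.reverse := by
  intro v hv
  obtain ⟨i, hi, huniq⟩ := hu v.reverse (by simpa using hv)
  have hlen := hi.1
  rw [List.length_reverse] at hlen
  refine ⟨u.length - n - i, by simpa [hv] using hi.reverse, fun j hj => ?_⟩
  have hjlen := hj.1
  have := huniq _ (by simpa [hv] using hj.reverse)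
  simp only [List.length_reverse, hv] at hjlen
  omega

end Reverse

theorem IsLinearUpword.pow_le_pow_card_mul {α n : ℕ} [NeZero α] {u : List (PSym α)}
    {D : Finset ℕ} (hu : IsLinearUpword α n u) (hD : ∀ k, u[k]? = some none → k ∈ D) :
    α ^ n ≤ α ^ D.card * (u.length + 1 - n) := by
  classical
  choose pos hpos using fun f : Fin n → Fin α => (hu (List.ofFn f) List.length_ofFn).exists
  let extend (f : Fin n → Fin α) (k : ℕ) : Fin α := if hk : k < n then f ⟨k, hk⟩ else 0
  -- a word is determined by where it occurs and by its letters under the holes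
  let code (f : Fin n → Fin α) : (D → Fin α) × ℕ := (fun d => extend f (d - pos f), pos f)
  have hcard := Finset.card_le_card_of_injOn (s := Finset.univ)
    (t := Finset.univ ×ˢ Finset.range (u.length + 1 - n)) code ?_ ?_
  · simpa [Finset.card_univ, Fintype.card_fun, Finset.card_product] using hcard
  · intro f _
    have := (hpos f).1
    simp only [List.length_ofFn] at this
    simp only [Finset.coe_product, Finset.coe_univ, Finset.coe_range, Set.mem_prod,
      Set.mem_univ, Set.mem_Iio, true_and, code]
    omega
  · intro f _ g _ hfg
    simp only [Prod.mk.injEq, code] at hfg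
    obtain ⟨hholes, hi⟩ := hfg
    funext j
    have hf := (hpos f).2 j (by simp)
    have hg := (hpos g).2 j (by simp)
    rw [← hi] at hg
    simp only [List.getElem?_ofFn, Fin.is_lt, dite_true, Option.map_some, Fin.eta] at hf hg
    rcases hf with hhole | hf
    · simpa [extend, hi] using congrFun hholes ⟨_, hD _ hhole⟩
    · rcases hg with hhole | hg
      · simp [hhole] at hf
      · simpa [hf] using hg

section DiamondPair

variable {α L p n i : ℕ} {c g : ℕ → Fin α}

def diamondPair (L p : ℕ) (c : ℕ → Fin α) : List (PSym α) :=
  (List.range L).map fun k => if k = p ∨ k = p + 1 then none else some (c k)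

@[simp]
theorem length_diamondPair : (diamondPair L p c).length = L := by
  simp [diamondPair]

theorem getElem?_diamondPair {k : ℕ} (hk : k < L) :
    (diamondPair L p c)[k]? = some (if k = p ∨ k = p + 1 then none else some (c k)) := by
  simp [diamondPair, List.getElem?_range hk]

theorem eq_or_eq_of_getElem?_diamondPair {k : ℕ} (hk : (diamondPair L p c)[k]? = some none) :
    k = p ∨ k = p + 1 := by
  have hkL : k < L := by simpa using (List.getElem?_eq_some_iff.mp hk).1
  rw [getElem?_diamondPair hkL] at hk
  by_contra hne
  simp [hne] at hk

theorem exists_eq_diamondPair [NeZero α] {u : List (PSym α)} (hc : u.count none = 2)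
    (hp : u[p]? = some none) (hp1 : u[p + 1]? = some none) :
    ∃ c : ℕ → Fin α, u = diamondPair u.length p c := by
  refine ⟨fun k => (u[k]?.join).getD 0, List.ext_getElem? fun k => ?_⟩
  rcases lt_or_ge k u.length with hk | hk
  · rw [getElem?_diamondPair hk]
    split_ifs with hkp
    · rcases hkp with rfl | rfl <;> assumption
    · obtain ⟨s, hs⟩ : ∃ s, u[k]? = some s := ⟨_, List.getElem?_eq_getElem hk⟩
      cases s with
      | none => exact absurd (List.eq_or_eq_of_count_eq_two hc hp hp1 hs) hkp
      | some a => simp [hs]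
  · rw [List.getElem?_eq_none hk, List.getElem?_eq_none (by simpa using hk)]

def OccursAt (L p n : ℕ) (c g : ℕ → Fin α) (i : ℕ) : Prop :=
  i + n ≤ L ∧ ∀ j < n, i + j ≠ p → i + j ≠ p + 1 → g j = c (i + j)

theorem matchAt_diamondPair_iff :
    MatchAt (diamondPair L p c) ((List.range n).map g) i ↔ OccursAt L p n c g i := by
  unfold MatchAt OccursAt
  simp only [length_diamondPair, List.length_map, List.length_range]
  refine and_congr_right fun hi => forall₂_congr fun j hj => ?_
  rw [getElem?_diamondPair (by omega), List.getElem?_map, List.getElem?_range hj]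
  by_cases h : i + j = p ∨ i + j = p + 1
  · simp only [if_pos h, true_or, true_iff]
    omega
  · simp only [if_neg h]
    simp only [not_or] at h
    simp [h, eq_comm]

theorem IsLinearUpword.existsUnique_occursAt (hu : IsLinearUpword α n (diamondPair L p c))
    (g : ℕ → Fin α) : ∃! i, OccursAt L p n c g i := by
  simpa only [matchAt_diamondPair_iff] using hu ((List.range n).map g) (by simp)

theorem OccursAt.shift {a : Fin α} (h : OccursAt L p n c g (i + 1))
    (ha : i ≠ p → i ≠ p + 1 → a = c i) :
    OccursAt L p n c (fun j => if j = 0 then a else g (j - 1)) i := by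
  refine ⟨by have := h.1; omega, fun j hj hjp hjp1 => ?_⟩
  rcases j with _ | j
  · simpa using ha hjp hjp1
  · simpa [show i + (j + 1) = i + 1 + j by omega] using
      h.2 j (by omega) (by omega) (by omega)

end DiamondPair

theorem Fin.two_eq_or_eq_add_one (x y : Fin 2) : x = y ∨ x = y + 1 := by
  fin_cases x <;> fin_cases y <;> decide

section Binary

variable {L p n : ℕ} {c : ℕ → Fin 2}

theorem occursAt_zero_of_add_le (h : ∀ g, ∃! i, OccursAt L p n c g i) (hn : 2 ≤ n)
    (hL : p + n ≤ L) (b : Fin 2) :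
    OccursAt L p n c
      (fun j => if j = 0 then b else if j = n - 1 then c (p + n) + 1 else c (p + 1 + j)) 0 := by
  set V : ℕ → Fin 2 :=
    fun j => if j = 0 then b else if j = n - 1 then c (p + n) + 1 else c (p + 1 + j)
  obtain ⟨_ | i, hi, -⟩ := h V
  · exact hi
  -- shifted one step left, an occurrence at `i + 1` becomes one of a word also read at `p`
  have hWi := hi.shift (a := c i) fun _ _ => rfl
  have hWp : OccursAt L p n c (fun j => if j = 0 then c i else V (j - 1)) p := by
    refine ⟨hL, fun j hj hjp hjp1 => ?_⟩
    simp [V, show j ≠ 0 by omega, show j - 1 ≠ 0 by omega, show j - 1 ≠ n - 1 by omega,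
      show p + 1 + (j - 1) = p + j by omega]
  obtain rfl : i = p := (h _).unique hWi hWp
  have hlast := hi.2 (n - 1) (by omega) (by omega) (by omega)
  simp [V, show n - 1 ≠ 0 by omega, show i + 1 + (n - 1) = i + n by omega] at hlast

theorem eq_zero_of_add_le (h : ∀ g, ∃! i, OccursAt L p n c g i) (hn : 2 ≤ n)
    (hL : p + n ≤ L) : p = 0 := by
  by_contra hp
  have h0 := (occursAt_zero_of_add_le h hn hL 0).2 0 (by omega) (Ne.symm hp) (by omega)
  have h1 := (occursAt_zero_of_add_le h hn hL 1).2 0 (by omega) (Ne.symm hp) (by omega)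
  simp only [↓reduceIte] at h0 h1
  exact absurd (h0.trans h1.symm) (by decide)

theorem eq_add_one_of_two_le_of_lt (h : ∀ g, ∃! i, OccursAt L 0 n c g i) (hn : 2 ≤ n)
    (hL : n ≤ L) {j : ℕ} (hj2 : 2 ≤ j) (hjn : j < n) : c j = c n + 1 := by
  have hV := occursAt_zero_of_add_le h hn (by simpa using hL) 0
  have key : ∀ k, k + 2 < n → c (n - 1 - k) = c n + 1 := by
    intro k
    induction k with
    | zero =>
      intro hk
      have := hV.2 (n - 1) (by omega) (by omega) (by omega)
      simpa [show n - 1 ≠ 0 by omega] using this.symm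
    | succ k ih =>
      intro hk
      have := hV.2 (n - 2 - k) (by omega) (by omega) (by omega)
      simp only [show n - 2 - k ≠ 0 by omega, show n - 2 - k ≠ n - 1 by omega, if_false,
        show 0 + 1 + (n - 2 - k) = n - 1 - k by omega, zero_add] at this
      rw [show n - 1 - (k + 1) = n - 2 - k by omega, ← this, ih (by omega)]
  simpa [show n - 1 - (n - 1 - j) = j by omega] using key (n - 1 - j) (by omega)

theorem length_le_two (h : ∀ g, ∃! i, OccursAt L 0 2 c g i) : L ≤ 2 := by
  by_contra hL
  have h1 : OccursAt L 0 2 c (fun j => c (1 + j)) 1 := ⟨by omega, fun _ _ _ _ => rfl⟩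
  have h0 : OccursAt L 0 2 c (fun j => c (1 + j)) 0 := ⟨by omega, fun _ _ _ _ => by omega⟩
  exact absurd ((h _).unique h1 h0) one_ne_zero

theorem false_of_four_le (h : ∀ g, ∃! i, OccursAt L 0 n c g i) (hn : 4 ≤ n) (hL : n + 2 ≤ L)
    (hc : ∀ j, 2 ≤ j → j < n → c j = c n + 1) : False := by
  set H : ℕ → Fin 2 :=
    fun j => if j + 2 < n then c n + 1 else if j + 2 = n then c n else c (n + 1) + 1
  obtain ⟨_ | _ | _ | i, hi, -⟩ := h H
  · have := hi.2 (n - 2) (by omega) (by omega) (by omega)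
    simp [H, show n - 2 + 2 = n by omega, hc (n - 2) (by omega) (by omega)] at this
  · have := hi.2 (n - 2) (by omega) (by omega) (by omega)
    simp [H, show n - 2 + 2 = n by omega, show 1 + (n - 2) = n - 1 by omega,
      hc (n - 1) (by omega) (by omega)] at this
  · have := hi.2 (n - 1) (by omega) (by omega) (by omega)
    simp [H, show 2 + (n - 1) = n + 1 by omega, show ¬n - 1 + 2 < n by omega,
      show n - 1 + 2 ≠ n by omega] at this
  · have hW1 : OccursAt L 0 n c (fun j => if j = 0 then c (i + 2) else H (j - 1)) 1 := by
      refine ⟨by omega, fun j hj _ hj1 => ?_⟩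
      rcases lt_or_eq_of_le (show j + 1 ≤ n - 1 + 1 by omega) with hjn | hjn
      · simp [H, show j ≠ 0 by omega, show j - 1 + 2 < n by omega,
          hc (1 + j) (by omega) (by omega)]
      · simp [H, show j ≠ 0 by omega, show j - 1 + 2 = n by omega, show 1 + j = n by omega]
    exact absurd ((h _).unique (hi.shift fun _ _ => rfl) hW1) (by omega)

end Binary

section Three

variable {L : ℕ} {c : ℕ → Fin 2}

theorem occursAt_two_of_three (h : ∀ g, ∃! i, OccursAt L 0 3 c g i) (h23 : c 2 = c 3 + 1) :
    OccursAt L 0 3 c (fun j => if j = 0 then c 2 else c 3) 2 := by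
  obtain ⟨_ | _ | _ | i, hi, -⟩ := h fun j => if j = 0 then c 2 else c 3
  · simpa [h23] using hi.2 2 (by omega) (by omega) (by omega)
  · simpa [h23] using hi.2 1 (by omega) (by omega) (by omega)
  · exact hi
  · have hW1 : OccursAt L 0 3 c
        (fun j => if j = 0 then c (i + 2) else if j - 1 = 0 then c 2 else c 3) 1 := by
      refine ⟨by have := hi.1; omega, fun j hj _ _ => ?_⟩
      interval_cases j <;> simp_all
    exact absurd ((h _).unique (hi.shift fun _ _ => rfl) hW1) (by omega)

theorem occursAt_three_of_three (h : ∀ g, ∃! i, OccursAt L 0 3 c g i) (h23 : c 2 = c 3 + 1) :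
    OccursAt L 0 3 c (fun _ => c 3) 3 := by
  have hG := occursAt_two_of_three h h23
  obtain ⟨_ | _ | _ | _ | i, hi, -⟩ := h fun _ => c 3
  · simpa [h23] using hi.2 2 (by omega) (by omega) (by omega)
  · simpa [h23] using hi.2 1 (by omega) (by omega) (by omega)
  · simpa [h23] using hi.2 0 (by omega) (by omega) (by omega)
  · exact hi
  · rcases Fin.two_eq_or_eq_add_one (c (i + 3)) (c 3) with hx | hx
    · have := hi.shift (a := c 3) fun _ _ => hx.symm
      simp only [ite_self] at this
      exact absurd ((h _).unique hi this) (by omega)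
    · have := hi.shift (a := c 2) fun _ _ => by rw [hx, h23]
      exact absurd ((h _).unique hG this) (by omega)

theorem length_eq_six_of_three (h : ∀ g, ∃! i, OccursAt L 0 3 c g i) (h23 : c 2 = c 3 + 1) :
    L = 6 ∧ c 4 = c 3 ∧ c 5 = c 3 := by
  have h4 := (occursAt_two_of_three h h23).2 2 (by omega) (by omega) (by omega)
  have h5 := occursAt_three_of_three h h23
  have hL6 := h5.1
  simp only [show (2 : ℕ) ≠ 0 by omega, if_false] at h4
  refine ⟨le_antisymm (not_lt.mp fun hL => ?_) hL6, h4.symm,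
    (h5.2 2 (by omega) (by omega) (by omega)).symm⟩
  -- the last window `c 4, c 5, c 6` repeats either the one at `3` or the one at `0`
  have hW : OccursAt L 0 3 c (fun j => c (4 + j)) 4 := ⟨by omega, fun _ _ _ _ => rfl⟩
  rcases Fin.two_eq_or_eq_add_one (c 6) (c 3) with h6 | h6
  · have hW3 : OccursAt L 0 3 c (fun j => c (4 + j)) 3 := by
      refine ⟨by omega, fun j hj _ _ => ?_⟩
      have h55 := h5.2 2 (by omega) (by omega) (by omega)
      interval_cases j <;> simp_all
    exact absurd ((h _).unique hW hW3) (by omega)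
  · have hW0 : OccursAt L 0 3 c (fun j => c (4 + j)) 0 := by
      refine ⟨by omega, fun j hj _ _ => ?_⟩
      interval_cases j <;> simp_all
    exact absurd ((h _).unique hW hW0) (by omega)

end Three

theorem diamondPair_eq_of_add_le {L p n : ℕ} {c : ℕ → Fin 2}
    (hu : IsLinearUpword 2 n (diamondPair L p c)) (hn : 2 ≤ n) (hL : p + n ≤ L) :
    (n = 2 ∧ diamondPair L p c = [none, none]) ∨
    (n = 3 ∧ (diamondPair L p c = [none, none, some 0, some 1, some 1, some 1] ∨
      diamondPair L p c = [none, none, some 1, some 0, some 0, some 0])) := by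
  have h := hu.existsUnique_occursAt
  obtain rfl := eq_zero_of_add_le h hn hL
  have hlow : 2 ^ n ≤ 2 ^ 2 * (L + 1 - n) := by
    simpa using hu.pow_le_pow_card_mul (D := {0, 1})
      fun k hk => by simpa using eq_or_eq_of_getElem?_diamondPair hk
  obtain rfl | rfl | hn4 : n = 2 ∨ n = 3 ∨ 4 ≤ n := by omega
  · obtain rfl : L = 2 := le_antisymm (length_le_two h) hL
    exact .inl ⟨rfl, by simp [diamondPair, List.range_succ]⟩
  · have h23 := eq_add_one_of_two_le_of_lt h hn (by omega) le_rfl (by omega)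
    obtain ⟨rfl, h4, h5⟩ := length_eq_six_of_three h h23
    refine .inr ⟨rfl, ?_⟩
    simp only [diamondPair, List.range_succ, List.range_zero, List.nil_append, List.map_append,
      List.map_cons, List.map_nil, h23, h4, h5]
    generalize c 3 = d
    fin_cases d <;> simp
  · have hpow : 2 ^ 4 ≤ 2 ^ n := Nat.pow_le_pow_right (by norm_num) hn4
    exact (false_of_four_le h hn4 (by omega) fun j hj2 hjn =>
      eq_add_one_of_two_le_of_lt h hn (by omega) hj2 hjn).elim

theorem IsLinearUpword.eq_of_adjacent_diamonds_of_add_le {n p : ℕ} {u : List (PSym 2)}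
    (hu : IsLinearUpword 2 n u) (hn : 2 ≤ n)
    (hc : u.count none = 2) (hp : u[p]? = some none) (hp1 : u[p + 1]? = some none)
    (hL : p + n ≤ u.length) :
    (n = 2 ∧ u = [none, none]) ∨
    (n = 3 ∧ (u = [none, none, some 0, some 1, some 1, some 1] ∨
      u = [none, none, some 1, some 0, some 0, some 0])) := by
  obtain ⟨c, hcu⟩ := exists_eq_diamondPair hc hp hp1
  rw [hcu] at hu ⊢
  exact diamondPair_eq_of_add_le hu hn hL

/-- For `A = {0,1}` and `n ≥ 2`, the only linear upwords for `A^n`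
containing exactly two `◊`s which are adjacent are, up to reversal and permuting the
letters `0` and `1`, the words `◊◊` (for `n = 2`) and `◊◊0111` (for `n = 3`). -/
theorem upword_adjacent_diamonds_classification (n : ℕ) (hn : 2 ≤ n)
    (u : List (PSym 2)) (hu : IsLinearUpword 2 n u)
    (hc : u.count (none : PSym 2) = 2)
    (hadj : ∃ i, u[i]? = some none ∧ u[i + 1]? = some none) :
    (n = 2 ∧ u = [none, none]) ∨
    (n = 3 ∧
      (u = [none, none, some 0, some 1, some 1, some 1] ∨
       u = [none, none, some 0, some 1, some 1, some 1].reverse ∨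
       u = [none, none, some 1, some 0, some 0, some 0] ∨
       u = [none, none, some 1, some 0, some 0, some 0].reverse)) := by
  obtain ⟨p, hp, hp1⟩ := hadj
  have hpL : p + 1 < u.length := (List.getElem?_eq_some_iff.mp hp1).1
  by_cases hright : p + n ≤ u.length
  · rcases hu.eq_of_adjacent_diamonds_of_add_le hn hc hp hp1 hright with h2 | ⟨h3, h | h⟩
    exacts [.inl h2, .inr ⟨h3, .inl h⟩, .inr ⟨h3, .inr (.inr (.inl h))⟩]
  by_cases hleft : n ≤ p + 2
  · have hq : u.reverse[u.length - 2 - p]? = some none := by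
      rw [List.getElem?_reverse (by omega),
        show u.length - 1 - (u.length - 2 - p) = p + 1 by omega]
      exact hp1
    have hq1 : u.reverse[u.length - 2 - p + 1]? = some none := by
      rw [List.getElem?_reverse (by omega),
        show u.length - 1 - (u.length - 2 - p + 1) = p by omega]
      exact hp
    have hrev := hu.reverse.eq_of_adjacent_diamonds_of_add_le hn (by rw [List.count_reverse, hc])
      hq hq1 (by simp; omega)
    rw [← u.reverse_reverse]
    rcases hrev with ⟨h2, h⟩ | ⟨h3, h | h⟩ <;> rw [h]
    exacts [.inl ⟨h2, rfl⟩, .inr ⟨h3, .inr (.inl rfl)⟩,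
      .inr ⟨h3, .inr (.inr (.inr rfl))⟩]
  have hlow : 2 ^ n ≤ 2 ^ 2 * (u.length + 1 - n) := by
    simpa using hu.pow_le_pow_card_mul (D := {p, p + 1})
      fun k hk => by simpa using List.eq_or_eq_of_count_eq_two hc hp hp1 hk
  have hsmall : n - 2 < 2 ^ (n - 2) := Nat.lt_two_pow_self
  rw [← Nat.sub_add_cancel hn, pow_add] at hlow
  omega
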